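/- arXiv:1610.09552 — 6 statements merged into one kernel-verified Lean document; each statement's English description precedes it below -/
import Mathlib

section
/- For every natural number n, ∑_{k=0}^{⌊n/2⌋} (C(n,k) − C(n,k−1))² = C(2n,n)/(n+1), the n-th Catalan number. -/
/-- Number of standard Young tableaux of the two-row shape `(n-k, k)`,
`f^λ = C(n,k) - C(n,k-1)`, with the convention `C(n,-1) = 0`. -/
def twoRowSYT (n k : ℕ) : ℤ :=
  (n.choose k : ℤ) - (if k = 0 then 0 else (n.choose (k - 1) : ℤ))

open Finset

private lemma vander (n m k : ℕ) :
    ∑ i ∈ range (k + 1), n.choose i * m.choose (k - i) = (n + m).choose k := by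
  rw [Nat.add_choose_eq, Finset.Nat.sum_antidiagonal_eq_sum_range_succ_mk]

private lemma sum_sq_choose (n : ℕ) :
    ∑ i ∈ range (n + 1), n.choose i * n.choose i = (2 * n).choose n := by
  rw [two_mul, ← vander n n n]
  refine Finset.sum_congr rfl fun i hi => ?_
  rw [Nat.choose_symm (Nat.lt_succ_iff.mp (mem_range.mp hi))]

private lemma sum_choose_succ (n : ℕ) :
    ∑ i ∈ range (n + 1), n.choose i * n.choose (i + 1) = (2 * n).choose (n + 1) := by
  rw [two_mul, ← vander n n (n + 1),
    Finset.sum_range_succ' (fun i => n.choose i * n.choose (n + 1 - i)) (n + 1)]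
  simp only [Nat.sub_zero, Nat.choose_eq_zero_of_lt (Nat.lt_succ_self n), Nat.choose_zero_right,
    mul_zero, zero_mul, add_zero]
  refine Finset.sum_congr rfl fun i hi => ?_
  have hi' := Nat.lt_succ_iff.mp (mem_range.mp hi)
  have he : n + 1 - (i + 1) = n - i := by omega
  rw [he, Nat.choose_symm hi', mul_comm]

private lemma twoRow_reflect (n k : ℕ) (hk : k ≤ n + 1) :
    twoRowSYT n (n + 1 - k) = - twoRowSYT n k := by
  unfold twoRowSYT
  rcases Nat.eq_zero_or_pos k with rfl | hk0
  · simp [Nat.choose_eq_zero_of_lt (Nat.lt_succ_self n)]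
  rcases eq_or_lt_of_le hk with rfl | hklt
  · simp [Nat.choose_eq_zero_of_lt (Nat.lt_succ_self n)]
  · have h1 : n + 1 - k ≠ 0 := by omega
    rw [if_neg h1, if_neg (by omega : ¬ k = 0)]
    have e1 : n + 1 - k = n - (k - 1) := by omega
    have e2 : n + 1 - k - 1 = n - k := by omega
    rw [e2, e1, Nat.choose_symm (by omega : k - 1 ≤ n), Nat.choose_symm (by omega : k ≤ n)]
    ring

theorem sum_sq_twoRowSYT_eq_catalan (n : ℕ) :
    ∑ k ∈ Finset.range (n / 2 + 1), ((twoRowSYT n k : ℚ)) ^ 2 =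
      ((2 * n).choose n : ℚ) / ((n : ℚ) + 1) := by
  set f : ℕ → ℚ := fun k => ((twoRowSYT n k : ℚ)) ^ 2 with hf
  have hsym : ∀ k, k ≤ n + 1 → f (n + 1 - k) = f k := by
    intro k hk
    simp only [hf]
    rw [twoRow_reflect n k hk]
    push_cast
    ring
  set m := n / 2 + 1 with hm
  have hm2 : m ≤ n + 2 := by omega
  have hsplit : ∑ k ∈ range (n + 2), f k
      = (∑ k ∈ range m, f k) + ∑ k ∈ Ico m (n + 2), f k := by
    rw [range_eq_Ico, ← Finset.sum_Ico_consecutive _ (Nat.zero_le m) hm2, ← range_eq_Ico]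
  have hIco : ∑ k ∈ Ico m (n + 2), f k = ∑ k ∈ range (n + 2 - m), f k := by
    rw [Finset.sum_Ico_eq_sum_range]
    calc ∑ i ∈ range (n + 2 - m), f (m + i)
        = ∑ i ∈ range (n + 2 - m), f (n + 2 - m - 1 - i) := by
          refine Finset.sum_congr rfl fun i hi => ?_
          have hi' := Finset.mem_range.mp hi
          have he : n + 2 - m - 1 - i = n + 1 - (m + i) := by omega
          rw [he, hsym (m + i) (by omega)]
      _ = ∑ i ∈ range (n + 2 - m), f i := Finset.sum_range_reflect f _
  have hdouble : ∑ k ∈ range (n + 2), f k = 2 * ∑ k ∈ range m, f k := by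
    rcases Nat.mod_two_eq_zero_or_one n with he | ho
    · have h2 : n + 2 - m = m := by omega
      rw [hsplit, hIco, h2]; ring
    · have h2 : n + 2 - m = m + 1 := by omega
      have hz : twoRowSYT n m = 0 := by
        have h := twoRow_reflect n m (by omega)
        rw [show n + 1 - m = m by omega] at h
        omega
      have hmid : f m = 0 := by simp [hf, hz]
      rw [hsplit, hIco, h2, Finset.sum_range_succ f m, hmid]; ring
  have hsq := congrArg (Nat.cast : ℕ → ℚ) (sum_sq_choose n)
  push_cast at hsq
  have hcs := congrArg (Nat.cast : ℕ → ℚ) (sum_choose_succ n)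
  push_cast at hcs
  have hS1 : ∑ k ∈ range (n + 2), ((n.choose k : ℚ)) ^ 2 = ((2 * n).choose n : ℚ) := by
    rw [Finset.sum_range_succ, Nat.choose_eq_zero_of_lt (Nat.lt_succ_self n)]
    simpa [sq] using hsq
  have hS2 : ∑ k ∈ range (n + 2),
      (if k = 0 then (0 : ℚ) else ((n.choose (k - 1) : ℚ))) ^ 2 = ((2 * n).choose n : ℚ) := by
    rw [Finset.sum_range_succ' (fun k => (if k = 0 then (0 : ℚ) else ((n.choose (k - 1) : ℚ))) ^ 2) (n + 1)]
    simpa [sq] using hsq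
  have hS3 : ∑ k ∈ range (n + 2),
      ((n.choose k : ℚ)) * (if k = 0 then (0 : ℚ) else ((n.choose (k - 1) : ℚ)))
        = ((2 * n).choose (n + 1) : ℚ) := by
    rw [Finset.sum_range_succ' (fun k => ((n.choose k : ℚ)) * (if k = 0 then (0 : ℚ) else ((n.choose (k - 1) : ℚ)))) (n + 1)]
    simpa [mul_comm] using hcs
  have hfull : ∑ k ∈ range (n + 2), f k
      = 2 * ((2 * n).choose n : ℚ) - 2 * ((2 * n).choose (n + 1) : ℚ) := by
    have hexp : ∀ k, f k = ((n.choose k : ℚ)) ^ 2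
        + (if k = 0 then (0 : ℚ) else ((n.choose (k - 1) : ℚ))) ^ 2
        - 2 * (((n.choose k : ℚ)) * (if k = 0 then (0 : ℚ) else ((n.choose (k - 1) : ℚ)))) := by
      intro k
      simp only [hf, twoRowSYT]
      push_cast [apply_ite (fun z : ℤ => (z : ℚ))]
      ring
    calc ∑ k ∈ range (n + 2), f k
        = (∑ k ∈ range (n + 2), ((n.choose k : ℚ)) ^ 2)
          + (∑ k ∈ range (n + 2), (if k = 0 then (0 : ℚ) else ((n.choose (k - 1) : ℚ))) ^ 2)
          - 2 * ∑ k ∈ range (n + 2),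
              ((n.choose k : ℚ)) * (if k = 0 then (0 : ℚ) else ((n.choose (k - 1) : ℚ))) := by
          rw [Finset.mul_sum, ← Finset.sum_add_distrib, ← Finset.sum_sub_distrib]
          exact Finset.sum_congr rfl fun k _ => hexp k
      _ = _ := by rw [hS1, hS2, hS3]; ring
  have hfinal : ((2 * n).choose n : ℚ) - ((2 * n).choose (n + 1) : ℚ)
      = ((2 * n).choose n : ℚ) / ((n : ℚ) + 1) := by
    have h := Nat.choose_succ_right_eq (2 * n) n
    rw [show 2 * n - n = n by omega] at h
    have hq := congrArg (Nat.cast : ℕ → ℚ) h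
    push_cast at hq
    have hn : ((n : ℚ) + 1) ≠ 0 := by positivity
    field_simp
    linear_combination -hq
  have h2S : 2 * ∑ k ∈ range m, f k
      = 2 * (((2 * n).choose n : ℚ) - ((2 * n).choose (n + 1) : ℚ)) := by
    rw [← hdouble, hfull]; ring
  have hS : ∑ k ∈ range m, f k
      = ((2 * n).choose n : ℚ) - ((2 * n).choose (n + 1) : ℚ) := by linarith
  rw [hS, hfinal]
end

section
/- Let 0 < y < x be real numbers and let 0 ≤ β̄ < 1/2. If (β_n) is a sequence of natural numbers with β_n ≤ n/2 and β_n/n → β̄, then lim_{n→∞} (1/n)·log(∑_{k=β_n}^{n−β_n} x^k y^{n−k}) = (1−β̄)·log x + β̄·log y. -/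
open Filter Real

theorem schur_polynomial_two_row_asymptotic_rate
    (x y : ℝ) (hy : 0 < y) (hyx : y < x)
    (βbar : ℝ) (hβ0 : 0 ≤ βbar) (hβhalf : βbar < 1 / 2)
    (β : ℕ → ℕ) (hβn : ∀ n, 2 * β n ≤ n)
    (hlim : Tendsto (fun n : ℕ => (β n : ℝ) / n) atTop (nhds βbar)) :
    Tendsto
      (fun n : ℕ =>
        (1 / (n : ℝ)) *
          Real.log (∑ k ∈ Finset.Icc (β n) (n - β n), x ^ k * y ^ (n - k)))
      atTop (nhds ((1 - βbar) * Real.log x + βbar * Real.log y)) := by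
  have hx : 0 < x := hy.trans hyx
  set S : ℕ → ℝ := fun n => ∑ k ∈ Finset.Icc (β n) (n - β n), x ^ k * y ^ (n - k) with hS
  set M : ℕ → ℝ := fun n => x ^ (n - β n) * y ^ (β n) with hM
  have hMpos : ∀ n, 0 < M n := fun n => by positivity
  -- lower bound: M n ≤ S n
  have hS1 : ∀ n, M n ≤ S n := by
    intro n
    have hmem : n - β n ∈ Finset.Icc (β n) (n - β n) := by
      simp only [Finset.mem_Icc]
      have := hβn n; omega
    have := Finset.single_le_sum (f := fun k => x ^ k * y ^ (n - k))
      (fun k _ => by positivity) hmem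
    have hnk : n - (n - β n) = β n := by have := hβn n; omega
    simpa [hM, hnk] using this
  -- upper bound: S n ≤ (n+1) * M n
  have hS2 : ∀ n, S n ≤ ((n : ℝ) + 1) * M n := by
    intro n
    have hterm : ∀ k ∈ Finset.Icc (β n) (n - β n), x ^ k * y ^ (n - k) ≤ M n := by
      intro k hk
      simp only [Finset.mem_Icc] at hk
      have hn := hβn n
      set d := n - β n - k with hd
      have h1 : n - β n = k + d := by omega
      have h2 : n - k = β n + d := by omega
      rw [h2]
      calc x ^ k * y ^ (β n + d) = (x ^ k * y ^ (β n)) * y ^ d := by ring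
        _ ≤ (x ^ k * y ^ (β n)) * x ^ d := by gcongr
        _ = x ^ (n - β n) * y ^ (β n) := by rw [h1]; ring
    calc S n ≤ (Finset.Icc (β n) (n - β n)).card • M n :=
          Finset.sum_le_card_nsmul _ _ _ hterm
      _ = ((Finset.Icc (β n) (n - β n)).card : ℝ) * M n := by rw [nsmul_eq_mul]
      _ ≤ ((n : ℝ) + 1) * M n := by
          have hc : (Finset.Icc (β n) (n - β n)).card ≤ n + 1 := by
            rw [Nat.card_Icc]; omega
          have : ((Finset.Icc (β n) (n - β n)).card : ℝ) ≤ (n : ℝ) + 1 := by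
            exact_mod_cast hc
          exact mul_le_mul_of_nonneg_right this (hMpos n).le
  have hSpos : ∀ n, 0 < S n := fun n => lt_of_lt_of_le (hMpos n) (hS1 n)
  -- the bounding sequences
  set lo : ℕ → ℝ := fun n =>
    (1 - (β n : ℝ) / n) * Real.log x + ((β n : ℝ) / n) * Real.log y with hlo
  have hloT : Tendsto lo atTop (nhds ((1 - βbar) * Real.log x + βbar * Real.log y)) := by
    exact (((tendsto_const_nhds.sub hlim).mul tendsto_const_nhds).add
      (hlim.mul tendsto_const_nhds))
  have hlog1 : Tendsto (fun n : ℕ => Real.log ((n : ℝ) + 1) / n) atTop (nhds 0) := by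
    have h1 : Tendsto (fun n : ℕ => (n : ℝ) + 1) atTop atTop :=
      tendsto_atTop_add_const_right _ 1 tendsto_natCast_atTop_atTop
    have h2 : (fun n : ℕ => Real.log ((n : ℝ) + 1)) =o[atTop] (fun n : ℕ => (n : ℝ) + 1) :=
      Real.isLittleO_log_id_atTop.comp_tendsto h1
    have h3 : (fun n : ℕ => (n : ℝ) + 1) =O[atTop] (fun n : ℕ => (n : ℝ)) := by
      rw [Asymptotics.isBigO_iff]
      refine ⟨2, ?_⟩
      filter_upwards [eventually_ge_atTop 1] with n hn
      have : (1 : ℝ) ≤ n := by exact_mod_cast hn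
      simp only [Real.norm_eq_abs]
      rw [abs_of_nonneg (by linarith), abs_of_nonneg (by linarith)]
      linarith
    exact (h2.trans_isBigO h3).tendsto_div_nhds_zero
  set hi : ℕ → ℝ := fun n => lo n + Real.log ((n : ℝ) + 1) / n with hhi
  have hhiT : Tendsto hi atTop (nhds ((1 - βbar) * Real.log x + βbar * Real.log y)) := by
    simpa using hloT.add hlog1
  -- eventual computation of log M
  have hlogM : ∀ n : ℕ, 1 ≤ n →
      (1 / (n : ℝ)) * Real.log (M n) = lo n := by
    intro n hn
    have hn0 : (0 : ℝ) < n := by exact_mod_cast hn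
    have hβle : β n ≤ n := by have := hβn n; omega
    have hcast : ((n - β n : ℕ) : ℝ) = (n : ℝ) - β n := by
      exact Nat.cast_sub hβle
    rw [hM]
    rw [Real.log_mul (by positivity) (by positivity), Real.log_pow, Real.log_pow, hcast,
      hlo]
    field_simp <;> ring
  apply tendsto_of_tendsto_of_tendsto_of_le_of_le' hloT hhiT
  · filter_upwards [eventually_ge_atTop 1] with n hn
    have hn0 : (0 : ℝ) < n := by exact_mod_cast hn
    rw [← hlogM n hn]
    have := Real.log_le_log (hMpos n) (hS1 n)
    exact mul_le_mul_of_nonneg_left this (by positivity)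
  · filter_upwards [eventually_ge_atTop 1] with n hn
    have hn0 : (0 : ℝ) < n := by exact_mod_cast hn
    have hub : Real.log (S n) ≤ Real.log ((n : ℝ) + 1) + Real.log (M n) := by
      rw [← Real.log_mul (by positivity) (hMpos n).ne']
      exact Real.log_le_log (hSpos n) (hS2 n)
    have : (1 / (n : ℝ)) * Real.log (S n) ≤
        (1 / (n : ℝ)) * (Real.log ((n : ℝ) + 1) + Real.log (M n)) :=
      mul_le_mul_of_nonneg_left hub (by positivity)
    calc (1 / (n : ℝ)) * Real.log (S n)
        ≤ (1 / (n : ℝ)) * (Real.log ((n : ℝ) + 1) + Real.log (M n)) := this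
      _ = (1 / (n : ℝ)) * Real.log (M n) + Real.log ((n : ℝ) + 1) / n := by ring
      _ = hi n := by rw [hlogM n hn, hhi]
end

section
/- Let 0 ≤ β̄ < 1/2 and let (β_n) be natural numbers with 2β_n ≤ n and β_n/n → β̄. Then lim_{n→∞} (1/n)·log( ∑_{j=β_n}^{n−β_n} 1/C(n,j) ) = −H(β̄), where H(t) = −t·log t − (1−t)·log(1−t) is the binary Shannon entropy (with H(0)=0). -/
open Filter Real

/-- Binary Shannon entropy, with the convention `H 0 = 0` (since `Real.log 0 = 0`). -/
noncomputable def binEntropy' (t : ℝ) : ℝ := -t * Real.log t - (1 - t) * Real.log (1 - t)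

-- step up: max-term argument, natural numbers
lemma step_up (n k j : ℕ) (hk : k ≤ n) (hj : j < k) :
    n.choose j * k^j * (n-k)^(n-j) ≤ n.choose (j+1) * k^(j+1) * (n-k)^(n-(j+1)) := by
  have key : n.choose j * (n-k) ≤ n.choose (j+1) * k := by
    have h := Nat.choose_succ_right_eq n j
    have h2 : n.choose j * (n-k) * (j+1) ≤ n.choose (j+1) * k * (j+1) := by
      calc n.choose j * (n-k) * (j+1) = n.choose j * ((n-k)*(j+1)) := by ring
        _ ≤ n.choose j * ((n-j)*k) := by
            exact Nat.mul_le_mul_left _ (Nat.mul_le_mul (by omega) (by omega))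
        _ = n.choose j * (n-j) * k := by ring
        _ = n.choose (j+1) * (j+1) * k := by rw [h]
        _ = n.choose (j+1) * k * (j+1) := by ring
    exact Nat.le_of_mul_le_mul_right h2 (by omega)
  have e1 : n - j = (n - (j+1)) + 1 := by omega
  rw [e1, pow_succ, pow_succ]
  calc n.choose j * k^j * ((n-k)^(n-(j+1)) * (n-k))
      = (n.choose j * (n-k)) * (k^j * (n-k)^(n-(j+1))) := by ring
    _ ≤ (n.choose (j+1) * k) * (k^j * (n-k)^(n-(j+1))) := Nat.mul_le_mul_right _ key
    _ = n.choose (j+1) * (k^j * k) * (n-k)^(n-(j+1)) := by ring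

lemma step_down (n k j : ℕ) (hk : k ≤ n) (hj : k ≤ j) :
    n.choose (j+1) * k^(j+1) * (n-k)^(n-(j+1)) ≤ n.choose j * k^j * (n-k)^(n-j) := by
  rcases le_or_gt n j with h | h
  · rw [Nat.choose_eq_zero_of_lt (by omega)]; simp
  have key : n.choose (j+1) * k ≤ n.choose j * (n-k) := by
    have h1 := Nat.choose_succ_right_eq n j
    have h2 : n.choose (j+1) * k * (j+1) ≤ n.choose j * (n-k) * (j+1) := by
      calc n.choose (j+1) * k * (j+1) = n.choose (j+1) * (j+1) * k := by ring
        _ = n.choose j * (n-j) * k := by rw [h1]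
        _ = n.choose j * ((n-j)*k) := by ring
        _ ≤ n.choose j * ((n-k)*(j+1)) := by
            exact Nat.mul_le_mul_left _ (Nat.mul_le_mul (by omega) (by omega))
        _ = n.choose j * (n-k) * (j+1) := by ring
    exact Nat.le_of_mul_le_mul_right h2 (by omega)
  have e1 : n - j = (n - (j+1)) + 1 := by omega
  rw [e1, pow_succ, pow_succ]
  calc n.choose (j+1) * (k^j * k) * (n-k)^(n-(j+1))
      = (n.choose (j+1) * k) * (k^j * (n-k)^(n-(j+1))) := by ring
    _ ≤ (n.choose j * (n-k)) * (k^j * (n-k)^(n-(j+1))) := Nat.mul_le_mul_right _ key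
    _ = n.choose j * k^j * ((n-k)^(n-(j+1)) * (n-k)) := by ring

lemma term_le_max (n k : ℕ) (hk : k ≤ n) (j : ℕ) :
    n.choose j * k^j * (n-k)^(n-j) ≤ n.choose k * k^k * (n-k)^(n-k) := by
  set f : ℕ → ℕ := fun j => n.choose j * k^j * (n-k)^(n-j) with hf
  have h1 : ∀ d, f (k - d) ≤ f k := by
    intro d
    induction d with
    | zero => simp
    | succ d ih =>
      rcases le_or_gt k d with h | h
      · have : k - (d+1) = k - d := by omega
        rw [this]; exact ih
      · have step := step_up n k (k - (d+1)) hk (by omega)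
        have e : k - (d+1) + 1 = k - d := by omega
        rw [e] at step
        exact step.trans ih
  have h2 : ∀ d, f (k + d) ≤ f k := by
    intro d
    induction d with
    | zero => simp
    | succ d ih =>
      have step := step_down n k (k + d) hk (by omega)
      have e : k + d + 1 = k + (d+1) := by omega
      rw [e] at step
      exact step.trans ih
  rcases le_total j k with h | h
  · have := h1 (k - j); rwa [Nat.sub_sub_self h] at this
  · have := h2 (j - k); rwa [Nat.add_sub_cancel' h] at this

-- sum bounds in ℕ
lemma pow_le_bound (n k : ℕ) (hk : k ≤ n) :
    n^n ≤ (n+1) * (n.choose k * k^k * (n-k)^(n-k)) := by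
  have hsum : (n:ℕ)^n = ∑ j ∈ Finset.range (n+1), k^j * (n-k)^(n-j) * n.choose j := by
    have h := add_pow k (n-k) n
    rw [Nat.add_sub_cancel' hk] at h
    simpa using h
  rw [hsum]
  calc ∑ j ∈ Finset.range (n+1), k^j * (n-k)^(n-j) * n.choose j
      ≤ ∑ _j ∈ Finset.range (n+1), n.choose k * k^k * (n-k)^(n-k) := by
        refine Finset.sum_le_sum fun j _ => ?_
        calc k^j * (n-k)^(n-j) * n.choose j = n.choose j * k^j * (n-k)^(n-j) := by ring
          _ ≤ _ := term_le_max n k hk j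
    _ = (n+1) * (n.choose k * k^k * (n-k)^(n-k)) := by
        rw [Finset.sum_const, Finset.card_range]; ring

lemma bound_le_pow (n k : ℕ) (hk : k ≤ n) :
    n.choose k * k^k * (n-k)^(n-k) ≤ n^n := by
  have hsum : (n:ℕ)^n = ∑ j ∈ Finset.range (n+1), k^j * (n-k)^(n-j) * n.choose j := by
    have h := add_pow k (n-k) n
    rw [Nat.add_sub_cancel' hk] at h
    simpa using h
  rw [hsum]
  have hmem : k ∈ Finset.range (n+1) := Finset.mem_range.mpr (by omega)
  calc n.choose k * k^k * (n-k)^(n-k) = k^k * (n-k)^(n-k) * n.choose k := by ring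
    _ ≤ _ := Finset.single_le_sum (f := fun j => k^j * (n-k)^(n-j) * n.choose j) (fun j _ => Nat.zero_le _) hmem

lemma choose_mono_mid (n a b : ℕ) (hab : a ≤ b) (hb : 2*b ≤ n) :
    n.choose a ≤ n.choose b := by
  induction b, hab using Nat.le_induction with
  | base => exact le_refl _
  | succ b hab ih =>
    refine (ih (by omega)).trans ?_
    exact Nat.choose_le_succ_of_lt_half_left (by omega)

lemma choose_mono_icc (n k j : ℕ) (hk : 2*k ≤ n) (h1 : k ≤ j) (h2 : j ≤ n - k) :
    n.choose k ≤ n.choose j := by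
  rcases le_total j (n - j) with h | h
  · exact choose_mono_mid n k j h1 (by omega)
  · have e : n.choose j = n.choose (n - j) := (Nat.choose_symm (by omega)).symm
    rw [e]
    exact choose_mono_mid n k (n-j) (by omega) (by omega)

lemma entropy_eq (n k : ℕ) (hn : 0 < n) (hk : 2*k ≤ n) :
    (n:ℝ) * binEntropy' ((k:ℝ) / n) =
      (n:ℝ) * Real.log n - (k:ℝ) * Real.log k - ((n:ℝ) - k) * Real.log ((n:ℝ) - k) := by
  have hn0 : (n:ℝ) ≠ 0 := Nat.cast_ne_zero.mpr hn.ne'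
  have hnk : (0:ℝ) < (n:ℝ) - k := by
    have h : k < n := by omega
    have : (k:ℝ) < n := by exact_mod_cast h
    linarith
  have h1 : (1:ℝ) - (k:ℝ)/n = ((n:ℝ) - k)/n := by field_simp
  have hlog2 : Real.log (((n:ℝ) - k)/n) = Real.log ((n:ℝ) - k) - Real.log n :=
    Real.log_div hnk.ne' hn0
  rcases Nat.eq_zero_or_pos k with hk0 | hk0
  · subst hk0
    simp only [binEntropy', Nat.cast_zero, zero_div, Real.log_zero, mul_zero, neg_zero,
      zero_mul, sub_zero, zero_sub, sub_zero] at *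
    rw [h1, hlog2]
    push_cast
    ring
  · have hk0' : (0:ℝ) < k := by exact_mod_cast hk0
    have hlog1 : Real.log ((k:ℝ)/n) = Real.log k - Real.log n := Real.log_div hk0'.ne' hn0
    unfold binEntropy'
    rw [h1, hlog1, hlog2]
    field_simp
    ring

lemma binEntropy'_eq : binEntropy' = Real.binEntropy := by
  funext p
  rw [binEntropy', Real.binEntropy, Real.log_inv, Real.log_inv]
  ring

lemma key_bound (n k : ℕ) (hn : 0 < n) (hk : 2*k ≤ n) :
    0 ≤ (1/(n:ℝ)) * Real.log (∑ j ∈ Finset.Icc k (n-k), ((n.choose j : ℝ))⁻¹)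
          + binEntropy' ((k:ℝ)/n) ∧
    (1/(n:ℝ)) * Real.log (∑ j ∈ Finset.Icc k (n-k), ((n.choose j : ℝ))⁻¹)
          + binEntropy' ((k:ℝ)/n) ≤ 2 * Real.log ((n:ℝ)+1) / n := by
  have hkn : k ≤ n := by omega
  have hnR : (0:ℝ) < n := by exact_mod_cast hn
  set S : ℝ := ∑ j ∈ Finset.Icc k (n-k), ((n.choose j : ℝ))⁻¹ with hS
  set C : ℝ := (n.choose k : ℝ) with hC
  have hCpos : (0:ℝ) < C := by rw [hC]; exact_mod_cast Nat.choose_pos hkn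
  set L : ℝ := Real.log C with hL
  -- the nat quantity A
  set A : ℕ := n.choose k * k^k * (n-k)^(n-k) with hA
  have hApos : 0 < A := by
    have h1 : 0 < n.choose k := Nat.choose_pos hkn
    have h2 : 0 < k^k := by
      rcases Nat.eq_zero_or_pos k with h | h
      · simp [h]
      · exact pow_pos h k
    have h3 : 0 < (n-k)^(n-k) := by
      rcases Nat.eq_zero_or_pos (n-k) with h | h
      · simp [h]
      · exact pow_pos h _
    positivity
  have hcast : ((n:ℝ)) - k = ((n-k : ℕ) : ℝ) := by
    rw [Nat.cast_sub hkn]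
  have hlogA : Real.log (A:ℝ) = L + (k:ℝ)*Real.log k + ((n:ℝ)-k)*Real.log ((n:ℝ)-k) := by
    have e : (A:ℝ) = C * ((k:ℝ))^k * (((n-k:ℕ)):ℝ)^(n-k) := by rw [hA, hC]; push_cast; ring
    rw [e, hcast]
    have h2 : ((k:ℝ))^k ≠ 0 := by
      rcases Nat.eq_zero_or_pos k with h | h
      · simp [h]
      · positivity
    have h3 : (((n-k:ℕ)):ℝ)^(n-k) ≠ 0 := by
      rcases Nat.eq_zero_or_pos (n-k) with h | h
      · simp [h]
      · have : (0:ℝ) < ((n-k:ℕ):ℝ) := by exact_mod_cast h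
        positivity
    rw [Real.log_mul (by rw [hC]; positivity) h3, Real.log_mul (ne_of_gt hCpos) h2,
      Real.log_pow, Real.log_pow]
  -- entropy identity
  have hent := entropy_eq n k hn hk
  -- bounds relating L and n*H
  have hb : (A:ℝ) ≤ (n:ℝ)^n := by exact_mod_cast bound_le_pow n k hkn
  have ha : (n:ℝ)^n ≤ ((n:ℝ)+1) * A := by exact_mod_cast pow_le_bound n k hkn
  have hlognn : Real.log ((n:ℝ)^n) = (n:ℝ) * Real.log n := by
    rw [Real.log_pow]
  have hAposR : (0:ℝ) < A := by exact_mod_cast hApos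
  have hLE1 : L ≤ (n:ℝ) * binEntropy' ((k:ℝ)/n) := by
    have := Real.log_le_log hAposR hb
    rw [hlogA, hlognn] at this
    linarith [hent]
  have hLE2 : (n:ℝ) * binEntropy' ((k:ℝ)/n) ≤ Real.log ((n:ℝ)+1) + L := by
    have h := Real.log_le_log (by positivity) ha
    rw [Real.log_mul (by positivity) (ne_of_gt hAposR), hlogA, hlognn] at h
    linarith [hent]
  -- bounds on S
  have hmem : k ∈ Finset.Icc k (n-k) := Finset.mem_Icc.mpr ⟨le_refl _, by omega⟩
  have hSlow : C⁻¹ ≤ S := by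
    refine Finset.single_le_sum (f := fun j => ((n.choose j : ℝ))⁻¹) ?_ hmem
    intro j _
    positivity
  have hSup : S ≤ ((n:ℝ)+1) * C⁻¹ := by
    have h1 : S ≤ (Finset.Icc k (n-k)).card • C⁻¹ := by
      refine Finset.sum_le_card_nsmul _ _ _ ?_
      intro j hj
      rw [Finset.mem_Icc] at hj
      have := choose_mono_icc n k j hk hj.1 hj.2
      have hCle : C ≤ (n.choose j : ℝ) := by rw [hC]; exact_mod_cast this
      exact inv_anti₀ hCpos hCle
    have h2 : ((Finset.Icc k (n-k)).card : ℝ) ≤ (n:ℝ)+1 := by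
      rw [Nat.card_Icc]
      have : n - k + 1 - k ≤ n + 1 := by omega
      exact_mod_cast this
    calc S ≤ (Finset.Icc k (n-k)).card • C⁻¹ := h1
      _ = ((Finset.Icc k (n-k)).card : ℝ) * C⁻¹ := by rw [nsmul_eq_mul]
      _ ≤ ((n:ℝ)+1) * C⁻¹ := by
          exact mul_le_mul_of_nonneg_right h2 (by positivity)
  have hSpos : 0 < S := lt_of_lt_of_le (by positivity) hSlow
  have hlogSlow : -L ≤ Real.log S := by
    have := Real.log_le_log (by positivity) hSlow
    rwa [Real.log_inv] at this
  have hlogSup : Real.log S ≤ Real.log ((n:ℝ)+1) - L := by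
    have := Real.log_le_log hSpos hSup
    rwa [Real.log_mul (by positivity) (by positivity), Real.log_inv, ← sub_eq_add_neg] at this
  have e : (1/(n:ℝ))*Real.log S + binEntropy' ((k:ℝ)/n)
      = (Real.log S + (n:ℝ) * binEntropy' ((k:ℝ)/n))/n := by
    field_simp
  rw [e]
  constructor
  · apply div_nonneg _ hnR.le
    linarith
  · rw [div_le_div_iff₀ hnR hnR]
    have h2 : Real.log S + (n:ℝ) * binEntropy' ((k:ℝ)/n) ≤ 2 * Real.log ((n:ℝ)+1) := by
      linarith
    nlinarith

theorem ghz_inner_product_rate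
    (βbar : ℝ) (hβ0 : 0 ≤ βbar) (hβhalf : βbar < 1 / 2)
    (β : ℕ → ℕ) (hβn : ∀ n, 2 * β n ≤ n)
    (hlim : Tendsto (fun n : ℕ => (β n : ℝ) / n) atTop (nhds βbar)) :
    Tendsto
      (fun n : ℕ =>
        (1 / (n : ℝ)) *
          Real.log (∑ j ∈ Finset.Icc (β n) (n - β n), ((n.choose j : ℝ))⁻¹))
      atTop (nhds (-binEntropy' βbar)) := by
  set f : ℕ → ℝ := fun n =>
    (1 / (n : ℝ)) * Real.log (∑ j ∈ Finset.Icc (β n) (n - β n), ((n.choose j : ℝ))⁻¹)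
    with hf
  set H : ℕ → ℝ := fun n => binEntropy' ((β n : ℝ) / n) with hHdef
  -- limit of the entropy term
  have hH : Tendsto H atTop (nhds (binEntropy' βbar)) := by
    rw [hHdef, binEntropy'_eq]
    exact (Real.binEntropy_continuous.tendsto βbar).comp hlim
  -- the upper bound tends to 0
  have t1 : Tendsto (fun n : ℕ => Real.log ((n:ℝ)+1) / ((n:ℝ)+1)) atTop (nhds 0) := by
    have base : Tendsto (fun x : ℝ => Real.log x / x) atTop (nhds 0) :=
      Real.isLittleO_log_id_atTop.tendsto_div_nhds_zero
    exact base.comp (tendsto_atTop_add_const_right _ 1 tendsto_natCast_atTop_atTop)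
  have t2 : Tendsto (fun n : ℕ => ((n:ℝ)+1) / n) atTop (nhds 1) := by
    have h1 : Tendsto (fun n : ℕ => 1 + ((n:ℝ))⁻¹) atTop (nhds (1 + 0)) :=
      tendsto_const_nhds.add (tendsto_natCast_atTop_atTop.inv_tendsto_atTop)
    rw [add_zero] at h1
    refine h1.congr' ?_
    filter_upwards [eventually_ge_atTop 1] with n hn
    have hn0 : (n:ℝ) ≠ 0 := by
      have : (0:ℝ) < n := by exact_mod_cast hn
      exact this.ne'
    field_simp
  have hupper : Tendsto (fun n : ℕ => 2 * Real.log ((n:ℝ)+1) / n) atTop (nhds 0) := by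
    have h := ((t1.const_mul 2).mul t2)
    rw [mul_zero, zero_mul] at h
    refine h.congr' ?_
    filter_upwards [eventually_ge_atTop 1] with n hn
    have hn0 : (n:ℝ) ≠ 0 := by
      have : (0:ℝ) < n := by exact_mod_cast hn
      exact this.ne'
    have hn1 : (n:ℝ) + 1 ≠ 0 := by positivity
    field_simp
  -- squeeze
  have h0 : Tendsto (fun n => f n + H n) atTop (nhds 0) := by
    refine tendsto_of_tendsto_of_tendsto_of_le_of_le' tendsto_const_nhds hupper ?_ ?_
    · filter_upwards [eventually_ge_atTop 1] with n hn
      exact (key_bound n (β n) hn (hβn n)).1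
    · filter_upwards [eventually_ge_atTop 1] with n hn
      exact (key_bound n (β n) hn (hβn n)).2
  have := h0.sub hH
  rw [zero_sub] at this
  exact this.congr (fun n => by ring)
end

section
/- For every θ ∈ (0, π/2), lim_{m→∞} (1/(2m))·log( ∑_{k=0}^{m} C(m,k)² · (cos²θ)^{m−k} · (sin²θ)^{k} / C(2m,k) ) = log((1+cos θ)/2). -/
open Filter Real Finset
open scoped Topology

/-!
Multiplying by `C(2m, m)` turns `C(m,k)² / C(2m,k)` into `C(m,k) C(2m-k, m)`, which by
Vandermonde equals `∑ⱼ C(m,j)² C(j,k)`. Writing `y = cos² θ`, `1 - y = sin² θ`, the `k`-sum then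
collapses by the binomial theorem for `y + (1 - y) = 1`, leaving
`∑ⱼ (C(m,j) cos^(m-j) θ)² / C(2m, m)`. By Cauchy–Schwarz the numerator lies between
`(1 + cos θ)^(2m) / (m + 1)` and `(1 + cos θ)^(2m)`, and `4^m / (2m + 1) ≤ C(2m, m) ≤ 4^m`, so the
sum is `((1 + cos θ) / 2)^(2m)` up to a polynomial factor, invisible at exponential scale.
-/

namespace Nat

theorem centralBinom_mul_choose {m k : ℕ} (hk : k ≤ m) :
    centralBinom m * m.choose k = (2 * m).choose k * (2 * m - k).choose m := by
  rw [centralBinom_eq_two_mul_choose, choose_mul (by omega),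
    ← choose_symm (by omega : m - k ≤ 2 * m - k)]
  congr 2
  omega

theorem four_pow_le_two_mul_add_one_mul_centralBinom (m : ℕ) :
    4 ^ m ≤ (2 * m + 1) * m.centralBinom :=
  calc 4 ^ m = ∑ r ∈ range (2 * m + 1), (2 * m).choose r := by
        rw [sum_range_choose, pow_mul]; norm_num
    _ ≤ ∑ _r ∈ range (2 * m + 1), m.centralBinom :=
        sum_le_sum fun r _ => choose_le_centralBinom r m
    _ = (2 * m + 1) * m.centralBinom := by simp

theorem choose_mul_choose_two_mul_sub_eq_sum {m k : ℕ} (hk : k ≤ m) :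
    m.choose k * (2 * m - k).choose m = ∑ j ∈ range (m + 1), m.choose j ^ 2 * j.choose k := by
  rw [show 2 * m - k = m + (m - k) by omega, add_choose_eq,
    Finset.Nat.sum_antidiagonal_eq_sum_range_succ_mk, mul_sum]
  refine sum_congr rfl fun j hj => ?_
  rw [mem_range] at hj
  rcases le_or_gt k j with hkj | hjk
  · have hsymm : (m - k).choose (m - j) = (m - k).choose (j - k) := by
      rw [← choose_symm (by omega : m - j ≤ m - k)]
      congr 1
      omega
    rw [hsymm, ← mul_assoc, mul_comm (m.choose k), mul_assoc, ← choose_mul hkj]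
    ring
  · simp [choose_eq_zero_of_lt hjk, choose_eq_zero_of_lt (by omega : m - k < m - j)]

end Nat

section Binomial

variable {R : Type*} [CommRing R]

theorem sum_range_choose_mul_pow_mul_one_sub_pow {j m : ℕ} (hj : j ≤ m) (y : R) :
    ∑ k ∈ range (m + 1), (j.choose k : R) * y ^ (m - k) * (1 - y) ^ k = y ^ (m - j) := by
  calc ∑ k ∈ range (m + 1), (j.choose k : R) * y ^ (m - k) * (1 - y) ^ k
      = ∑ k ∈ range (j + 1), (j.choose k : R) * y ^ (m - k) * (1 - y) ^ k := by
        refine (sum_subset (range_subset_range.2 (by omega)) fun k _ hk => ?_).symm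
        simp [Nat.choose_eq_zero_of_lt (by simpa using hk : j < k)]
    _ = ∑ k ∈ range (j + 1), y ^ (m - j) * ((1 - y) ^ k * y ^ (j - k) * j.choose k) := by
        refine sum_congr rfl fun k hk => ?_
        rw [show m - k = (m - j) + (j - k) by simp at hk; omega, pow_add]
        ring
    _ = y ^ (m - j) := by rw [← mul_sum, ← add_pow, sub_add_cancel, one_pow, mul_one]

theorem sum_range_choose_mul_choose_mul_pow (m : ℕ) (y : R) :
    ∑ k ∈ range (m + 1), (m.choose k * (2 * m - k).choose m : R) * y ^ (m - k) * (1 - y) ^ k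
      = ∑ j ∈ range (m + 1), (m.choose j : R) ^ 2 * y ^ (m - j) := by
  calc _ = ∑ k ∈ range (m + 1), ∑ j ∈ range (m + 1),
          (m.choose j : R) ^ 2 * ((j.choose k : R) * y ^ (m - k) * (1 - y) ^ k) := by
        refine sum_congr rfl fun k hk => ?_
        rw [← Nat.cast_mul,
          Nat.choose_mul_choose_two_mul_sub_eq_sum (by simpa [Nat.lt_succ_iff] using hk)]
        push_cast
        simp only [sum_mul, mul_assoc]
    _ = _ := by
        rw [sum_comm]
        refine sum_congr rfl fun j hj => ?_
        rw [← mul_sum,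
          sum_range_choose_mul_pow_mul_one_sub_pow (by simpa [Nat.lt_succ_iff] using hj)]

theorem sum_range_choose_mul_pow (m : ℕ) (x : R) :
    ∑ j ∈ range (m + 1), (m.choose j : R) * x ^ (m - j) = (1 + x) ^ m := by
  simp [add_pow, mul_comm]

end Binomial

theorem sum_range_choose_sq_mul_pow_div_choose {K : Type*} [Field K] [CharZero K]
    (m : ℕ) (y : K) :
    ∑ k ∈ range (m + 1), (m.choose k : K) ^ 2 * y ^ (m - k) * (1 - y) ^ k / ((2 * m).choose k : K)
      = (∑ j ∈ range (m + 1), (m.choose j : K) ^ 2 * y ^ (m - j)) / m.centralBinom := by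
  rw [eq_div_iff (Nat.cast_ne_zero.2 m.centralBinom_ne_zero), sum_mul,
    ← sum_range_choose_mul_choose_mul_pow]
  refine sum_congr rfl fun k hk => ?_
  have hkm : k ≤ m := by simpa [Nat.lt_succ_iff] using hk
  have hchoose : ((2 * m).choose k : K) ≠ 0 := Nat.cast_ne_zero.2 (Nat.choose_pos (by omega)).ne'
  have hkey : (m.centralBinom * m.choose k : K) = (2 * m).choose k * (2 * m - k).choose m := by
    exact_mod_cast Nat.centralBinom_mul_choose hkm
  field_simp
  linear_combination (m.choose k : K) * y ^ (m - k) * (1 - y) ^ k * hkey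

theorem sum_sq_choose_mul_pow_le {x : ℝ} (hx : 0 ≤ x) (m : ℕ) :
    ∑ j ∈ range (m + 1), ((m.choose j : ℝ) * x ^ (m - j)) ^ 2 ≤ (1 + x) ^ (2 * m) := by
  rw [mul_comm, pow_mul, ← sum_range_choose_mul_pow]
  exact sum_sq_le_sq_sum_of_nonneg fun j _ => by positivity

theorem pow_le_succ_mul_sum_sq_choose_mul_pow (x : ℝ) (m : ℕ) :
    (1 + x) ^ (2 * m) ≤ (m + 1) * ∑ j ∈ range (m + 1), ((m.choose j : ℝ) * x ^ (m - j)) ^ 2 := by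
  rw [mul_comm, pow_mul, ← sum_range_choose_mul_pow]
  simpa using sq_sum_le_card_mul_sum_sq (s := range (m + 1))
    (f := fun j => (m.choose j : ℝ) * x ^ (m - j))

theorem half_pow_two_mul (x : ℝ) (m : ℕ) :
    ((1 + x) / 2) ^ (2 * m) = (1 + x) ^ (2 * m) / 4 ^ m := by
  rw [div_pow, pow_mul (2 : ℝ)]
  norm_num

section Bounds

variable {x : ℝ} (hx : 0 ≤ x) (m : ℕ)
include hx

theorem half_pow_two_mul_div_le_sum_sq_div_centralBinom :
    ((1 + x) / 2) ^ (2 * m) / (2 * m + 1)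
      ≤ (∑ j ∈ range (m + 1), ((m.choose j : ℝ) * x ^ (m - j)) ^ 2) / m.centralBinom := by
  have hC : (m.centralBinom : ℝ) ≤ 4 ^ m := by exact_mod_cast Nat.centralBinom_le_four_pow m
  have hC0 : (0 : ℝ) < m.centralBinom := by exact_mod_cast m.centralBinom_pos
  calc ((1 + x) / 2) ^ (2 * m) / (2 * m + 1) = (1 + x) ^ (2 * m) / ((2 * m + 1) * 4 ^ m) := by
        rw [half_pow_two_mul, div_div, mul_comm ((4 : ℝ) ^ m)]
    _ ≤ (1 + x) ^ (2 * m) / ((m + 1) * m.centralBinom) := by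
        gcongr
        linarith [(Nat.cast_nonneg m : (0 : ℝ) ≤ m)]
    _ ≤ (∑ j ∈ range (m + 1), ((m.choose j : ℝ) * x ^ (m - j)) ^ 2) / m.centralBinom := by
        rw [← div_div]
        gcongr
        rw [div_le_iff₀' (by positivity)]
        exact pow_le_succ_mul_sum_sq_choose_mul_pow x m

theorem sum_sq_div_centralBinom_le_mul_half_pow_two_mul :
    (∑ j ∈ range (m + 1), ((m.choose j : ℝ) * x ^ (m - j)) ^ 2) / m.centralBinom
      ≤ (2 * m + 1) * ((1 + x) / 2) ^ (2 * m) := by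
  have hC : (4 : ℝ) ^ m ≤ (2 * m + 1) * m.centralBinom := by
    exact_mod_cast Nat.four_pow_le_two_mul_add_one_mul_centralBinom m
  have hC0 : (0 : ℝ) < m.centralBinom := by exact_mod_cast m.centralBinom_pos
  rw [div_le_iff₀ hC0, half_pow_two_mul, mul_div_assoc', div_mul_eq_mul_div,
    le_div_iff₀ (by positivity)]
  calc (∑ j ∈ range (m + 1), ((m.choose j : ℝ) * x ^ (m - j)) ^ 2) * 4 ^ m
      ≤ (1 + x) ^ (2 * m) * ((2 * m + 1) * m.centralBinom) := by
        gcongr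
        exact sum_sq_choose_mul_pow_le hx m
    _ = _ := by ring

end Bounds

theorem tendsto_log_succ_div_natCast : Tendsto (fun k : ℕ => log (k + 1) / k) atTop (𝓝 0) := by
  refine ((tendsto_pow_log_div_mul_add_atTop 1 (-1) 1 one_ne_zero).comp
    (tendsto_atTop_add_const_right _ 1 tendsto_natCast_atTop_atTop)).congr fun k => ?_
  simp

theorem tendsto_inv_mul_log_of_pow_div_le_of_le_mul_pow {s : ℕ → ℝ} {n : ℕ → ℕ} {r : ℝ}
    (hr : 0 < r) (hn : Tendsto n atTop atTop) (hlo : ∀ m, r ^ n m / (n m + 1) ≤ s m)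
    (hup : ∀ m, s m ≤ (n m + 1) * r ^ n m) :
    Tendsto (fun m => 1 / (n m : ℝ) * log (s m)) atTop (𝓝 (log r)) := by
  have habs : ∀ m, |log (s m) - n m * log r| ≤ log (n m + 1) := fun m => by
    have hs : 0 < s m := (by positivity : 0 < r ^ n m / (n m + 1)).trans_le (hlo m)
    have hlog_lo := log_le_log (by positivity) (hlo m)
    have hlog_up := log_le_log hs (hup m)
    rw [log_div (by positivity) (by positivity), log_pow] at hlog_lo
    rw [log_mul (by positivity) (by positivity), log_pow] at hlog_up
    rw [abs_sub_le_iff]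
    constructor <;> linarith
  rw [← tendsto_sub_nhds_zero_iff]
  refine squeeze_zero_norm' ?_ (tendsto_log_succ_div_natCast.comp hn)
  filter_upwards [hn.eventually_ne_atTop 0] with m hm
  have hn0 : (0 : ℝ) < n m := by exact_mod_cast Nat.pos_of_ne_zero hm
  rw [norm_eq_abs, show 1 / (n m : ℝ) * log (s m) - log r = (log (s m) - n m * log r) / n m by
    field_simp, abs_div, abs_of_pos hn0, Function.comp_apply]
  exact div_le_div_of_nonneg_right (habs m) hn0.le

theorem ghz_class_vertex_rate (θ : ℝ) (hθ0 : 0 < θ) (hθ : θ < Real.pi / 2) :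
    Tendsto
      (fun m : ℕ =>
        (1 / (2 * (m : ℝ))) *
          Real.log (∑ k ∈ Finset.range (m + 1),
            (m.choose k : ℝ) ^ 2 * (Real.cos θ ^ 2) ^ (m - k) * (Real.sin θ ^ 2) ^ k /
              ((2 * m).choose k : ℝ)))
      atTop (nhds (Real.log ((1 + Real.cos θ) / 2))) := by
  have hcos : 0 ≤ cos θ := cos_nonneg_of_mem_Icc ⟨by linarith, hθ.le⟩
  have hsum : ∀ m : ℕ, ∑ k ∈ range (m + 1),
      (m.choose k : ℝ) ^ 2 * (cos θ ^ 2) ^ (m - k) * (sin θ ^ 2) ^ k / ((2 * m).choose k : ℝ)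
        = (∑ j ∈ range (m + 1), ((m.choose j : ℝ) * cos θ ^ (m - j)) ^ 2) / m.centralBinom := by
    intro m
    rw [sin_sq, sum_range_choose_sq_mul_pow_div_choose]
    simp only [mul_pow, ← pow_mul, mul_comm _ 2]
  have h := tendsto_inv_mul_log_of_pow_div_le_of_le_mul_pow (n := fun m => 2 * m)
    (by positivity : 0 < (1 + cos θ) / 2) (tendsto_id.const_mul_atTop' two_pos)
    (fun m => by push_cast; exact half_pow_two_mul_div_le_sum_sq_div_centralBinom hcos m)
    (fun m => by push_cast; exact sum_sq_div_centralBinom_le_mul_half_pow_two_mul hcos m)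
  simpa only [hsum, Nat.cast_mul, Nat.cast_ofNat] using h
end

section
/- Let n, α, β, γ be natural numbers. Consider the system in nonnegative integers n₁,…,n₅ with n₅ ≤ 1: n−α = n₁+2n₂+n₃+n₄+2n₅, α = n₃+n₄+n₅, n−β = n₁+n₂+2n₃+n₄+2n₅, β = n₂+n₄+n₅, n−γ = n₁+n₂+n₃+2n₄+2n₅, γ = n₂+n₃+n₅. Then the system has at most one solution; a solution exists if and only if α+β+γ ≤ n, α ≤ β+γ, β ≤ α+γ, and γ ≤ α+β; and when it exists, n₁ = n−(α+β+γ), n₂ = ⌊(β+γ−α)/2⌋, n₃ = ⌊(α+γ−β)/2⌋, n₄ = ⌊(α+β−γ)/2⌋, n₅ = (α+β+γ) mod 2. -/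
/-- The system expressing the Young-frame triplet `((n-α,α),(n-β,β),(n-γ,γ))` as a
nonnegative integer combination of the fundamental triplets of the W-class covariants
`A₁₁₁, B₂₀₀, B₀₂₀, B₀₀₂, C₁₁₁` (with `n₅ ≤ 1`).  The equations `n - α = …` etc. are
recorded additively as `… + α = n`. -/
def WSystem (n α β γ n₁ n₂ n₃ n₄ n₅ : ℕ) : Prop :=
  n₅ ≤ 1 ∧
  n₁ + 2 * n₂ + n₃ + n₄ + 2 * n₅ + α = n ∧ α = n₃ + n₄ + n₅ ∧
  n₁ + n₂ + 2 * n₃ + n₄ + 2 * n₅ + β = n ∧ β = n₂ + n₄ + n₅ ∧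
  n₁ + n₂ + n₃ + 2 * n₄ + 2 * n₅ + γ = n ∧ γ = n₂ + n₃ + n₅

theorem w_class_covariant_system (n α β γ : ℕ) :
    (∀ a₁ a₂ a₃ a₄ a₅ b₁ b₂ b₃ b₄ b₅ : ℕ,
        WSystem n α β γ a₁ a₂ a₃ a₄ a₅ → WSystem n α β γ b₁ b₂ b₃ b₄ b₅ →
        a₁ = b₁ ∧ a₂ = b₂ ∧ a₃ = b₃ ∧ a₄ = b₄ ∧ a₅ = b₅) ∧
    ((∃ n₁ n₂ n₃ n₄ n₅ : ℕ, WSystem n α β γ n₁ n₂ n₃ n₄ n₅) ↔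
        α + β + γ ≤ n ∧ α ≤ β + γ ∧ β ≤ α + γ ∧ γ ≤ α + β) ∧
    (∀ n₁ n₂ n₃ n₄ n₅ : ℕ, WSystem n α β γ n₁ n₂ n₃ n₄ n₅ →
        n₁ = n - (α + β + γ) ∧ n₂ = (β + γ - α) / 2 ∧ n₃ = (α + γ - β) / 2 ∧
        n₄ = (α + β - γ) / 2 ∧ n₅ = (α + β + γ) % 2) := by
  refine ⟨?_, ⟨?_, ?_⟩, ?_⟩
  · intro a₁ a₂ a₃ a₄ a₅ b₁ b₂ b₃ b₄ b₅ ha hb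
    unfold WSystem at ha hb; omega
  · rintro ⟨n₁, n₂, n₃, n₄, n₅, h⟩
    unfold WSystem at h; omega
  · rintro ⟨h1, h2, h3, h4⟩
    exact ⟨n - (α + β + γ), (β + γ - α) / 2, (α + γ - β) / 2, (α + β - γ) / 2,
      (α + β + γ) % 2, by unfold WSystem; omega⟩
  · intro n₁ n₂ n₃ n₄ n₅ h
    unfold WSystem at h; omega
end

section
/- Let ψ ∈ ℂ²⊗ℂ²⊗ℂ² be a unit vector and let ρ_A, ρ_B, ρ_C denote the reduced density matrices obtained by partial trace over the complementary pairs of tensor factors. Let λ_A, λ_B, λ_C be their respective smallest eigenvalues. Then λ_A ≤ λ_B + λ_C (and similarly for the cyclic permutations). -/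
open scoped ComplexConjugate

/-- Reduced density matrix of qubit `A` of a pure three-qubit state `ψ`
(partial trace over the `B` and `C` factors). -/
noncomputable def rhoA (ψ : Fin 2 → Fin 2 → Fin 2 → ℂ) : Matrix (Fin 2) (Fin 2) ℂ :=
  fun i i' => ∑ j : Fin 2, ∑ k : Fin 2, ψ i j k * conj (ψ i' j k)

/-- Reduced density matrix of qubit `B`. -/
noncomputable def rhoB (ψ : Fin 2 → Fin 2 → Fin 2 → ℂ) : Matrix (Fin 2) (Fin 2) ℂ :=
  fun j j' => ∑ i : Fin 2, ∑ k : Fin 2, ψ i j k * conj (ψ i j' k)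

/-- Reduced density matrix of qubit `C`. -/
noncomputable def rhoC (ψ : Fin 2 → Fin 2 → Fin 2 → ℂ) : Matrix (Fin 2) (Fin 2) ℂ :=
  fun k k' => ∑ i : Fin 2, ∑ j : Fin 2, ψ i j k * conj (ψ i j k')

/-!
Since `tr ρ_X = ‖ψ‖²`, the smallest eigenvalue is `λ_X = ‖ψ‖² - μ_X` with `μ_X` the largest one,
and `λ_A ≤ λ_B + λ_C` becomes `μ_B + μ_C ≤ ‖ψ‖² + μ_A`. Take unit top eigenvectors `b` of `ρ_B`
and `c` of `ρ_C`, and let `φ = (1 ⊗ b* ⊗ c*) ψ`. Positivity of `(1 - P_b) ⊗ (1 - P_c)` on each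
slice `ψ i` gives `μ_B + μ_C ≤ ‖ψ‖² + ‖φ‖²`, while Cauchy–Schwarz gives
`‖φ‖⁴ = |⟨φ ⊗ b ⊗ c, ψ⟩|² ≤ ⟨φ, ρ_A φ⟩ ≤ μ_A ‖φ‖²`. The other two inequalities follow by
cyclically permuting the tensor factors.
-/

open scoped ComplexOrder

namespace Matrix

variable {n 𝕜 : Type*} [Fintype n] [RCLike 𝕜]

theorem ofReal_sum_norm_sq (v : n → 𝕜) : ((∑ i, ‖v i‖ ^ 2 : ℝ) : 𝕜) = star v ⬝ᵥ v := by
  push_cast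
  simp only [dotProduct, Pi.star_apply, RCLike.star_def, RCLike.conj_mul]

theorem sum_norm_sq_sub_dotProduct_mul {b : n → 𝕜} (hb : ∑ i, ‖b i‖ ^ 2 = 1) (v : n → 𝕜) :
    ∑ i, ‖v i - (star b ⬝ᵥ v) * b i‖ ^ 2 = ∑ i, ‖v i‖ ^ 2 - ‖star b ⬝ᵥ v‖ ^ 2 := by
  apply RCLike.ofReal_injective (K := 𝕜)
  have hb' : star b ⬝ᵥ b = 1 := by rw [← ofReal_sum_norm_sq, hb, RCLike.ofReal_one]
  have hvb : star v ⬝ᵥ b = star (star b ⬝ᵥ v) := star_dotProduct v b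
  rw [ofReal_sum_norm_sq (fun i => v i - (star b ⬝ᵥ v) * b i), RCLike.ofReal_sub,
    ofReal_sum_norm_sq, RCLike.ofReal_pow, ← RCLike.conj_mul]
  change star (v - (star b ⬝ᵥ v) • b) ⬝ᵥ (v - (star b ⬝ᵥ v) • b) = _
  simp only [star_sub, star_smul, sub_dotProduct, dotProduct_sub, smul_dotProduct,
    dotProduct_smul, hb', hvb, smul_eq_mul, RCLike.star_def]
  ring

theorem norm_sq_dotProduct_le {b : n → 𝕜} (hb : ∑ i, ‖b i‖ ^ 2 = 1) (v : n → 𝕜) :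
    ‖star b ⬝ᵥ v‖ ^ 2 ≤ ∑ i, ‖v i‖ ^ 2 := by
  linarith [sum_norm_sq_sub_dotProduct_mul hb v,
    show 0 ≤ ∑ i, ‖v i - (star b ⬝ᵥ v) * b i‖ ^ 2 by positivity]

theorem sum_norm_sq_contract_add_le {κ τ : Type*} [Fintype κ] [Fintype τ] (X : κ → τ → 𝕜)
    {b : κ → 𝕜} {c : τ → 𝕜} (hb : ∑ j, ‖b j‖ ^ 2 = 1) (hc : ∑ k, ‖c k‖ ^ 2 = 1) :
    ∑ k, ‖star b ⬝ᵥ fun j => X j k‖ ^ 2 + ∑ j, ‖star c ⬝ᵥ X j‖ ^ 2 ≤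
      ∑ j, ∑ k, ‖X j k‖ ^ 2 + ‖star b ⬝ᵥ fun j => star c ⬝ᵥ X j‖ ^ 2 := by
  set u : τ → 𝕜 := fun k => star b ⬝ᵥ fun j => X j k
  set y : κ → 𝕜 := fun j => star c ⬝ᵥ X j
  set Z : κ → τ → 𝕜 := fun j k => X j k - u k * b j
  -- `Z = ((1 - P_b) ⊗ 1) X`: the claim is Bessel's `‖(1 ⊗ P_c) Z‖² ≤ ‖Z‖²`, expanded by Pythagoras.
  have hZ : ∑ j, ∑ k, ‖Z j k‖ ^ 2 = ∑ j, ∑ k, ‖X j k‖ ^ 2 - ∑ k, ‖u k‖ ^ 2 := by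
    rw [Finset.sum_comm, Finset.sum_comm (f := fun j k => ‖X j k‖ ^ 2), ← Finset.sum_sub_distrib]
    exact Finset.sum_congr rfl fun k _ => sum_norm_sq_sub_dotProduct_mul hb _
  have hcZ : ∀ j, star c ⬝ᵥ Z j = y j - (star b ⬝ᵥ y) * b j := by
    intro j
    simp only [Z, y, u, dotProduct, mul_sub, Finset.sum_sub_distrib, Finset.mul_sum,
      Finset.sum_mul]
    rw [Finset.sum_comm (γ := κ)]
    congr 1
    exact Finset.sum_congr rfl fun _ _ => Finset.sum_congr rfl fun _ _ => by ring
  have hy : ∑ j, ‖star c ⬝ᵥ Z j‖ ^ 2 = ∑ j, ‖y j‖ ^ 2 - ‖star b ⬝ᵥ y‖ ^ 2 := by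
    simp_rw [hcZ]
    exact sum_norm_sq_sub_dotProduct_mul hb y
  have hCS : ∑ j, ‖star c ⬝ᵥ Z j‖ ^ 2 ≤ ∑ j, ∑ k, ‖Z j k‖ ^ 2 :=
    Finset.sum_le_sum fun j _ => norm_sq_dotProduct_le hc (Z j)
  linarith

variable [DecidableEq n] {A : Matrix n n 𝕜}

theorem IsHermitian.posSemidef_smul_one_sub (hA : A.IsHermitian) {c : ℝ}
    (hc : ∀ i, hA.eigenvalues i ≤ c) : ((c : 𝕜) • 1 - A).PosSemidef := by
  have hconj : (c : 𝕜) • 1 - A = Unitary.conjStarAlgAut 𝕜 _ hA.eigenvectorUnitary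
      (diagonal (RCLike.ofReal ∘ fun i => c - hA.eigenvalues i)) := by
    conv_lhs => rw [hA.spectral_theorem,
      ← map_one (Unitary.conjStarAlgAut 𝕜 _ hA.eigenvectorUnitary), ← map_smul, ← map_sub]
    congr 1
    ext i j
    by_cases h : i = j <;> simp [diagonal, h, Algebra.algebraMap_eq_smul_one, sub_smul]
  rw [hconj, Unitary.conjStarAlgAut_apply,
    IsUnit.posSemidef_star_right_conjugate_iff Unitary.isUnit_coe]
  simp [posSemidef_diagonal_iff, hc]

theorem IsHermitian.re_dotProduct_mulVec_le (hA : A.IsHermitian) {c : ℝ}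
    (hc : ∀ i, hA.eigenvalues i ≤ c) (v : n → 𝕜) :
    RCLike.re (star v ⬝ᵥ A *ᵥ v) ≤ c * ∑ i, ‖v i‖ ^ 2 := by
  have := (hA.posSemidef_smul_one_sub hc).re_dotProduct_nonneg v
  rw [sub_mulVec, dotProduct_sub, smul_mulVec, one_mulVec, dotProduct_smul, ← ofReal_sum_norm_sq,
    smul_eq_mul, ← RCLike.ofReal_mul, map_sub, RCLike.ofReal_re] at this
  linarith

theorem IsHermitian.exists_re_dotProduct_mulVec_eq (hA : A.IsHermitian) (i : n) :
    ∃ v : n → 𝕜, ∑ j, ‖v j‖ ^ 2 = 1 ∧ RCLike.re (star v ⬝ᵥ A *ᵥ v) = hA.eigenvalues i := by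
  refine ⟨hA.eigenvectorBasis i, ?_, (hA.eigenvalues_eq i).symm⟩
  rw [← EuclideanSpace.norm_sq_eq, hA.eigenvectorBasis.orthonormal.1 i, one_pow]

end Matrix

namespace Tripartite

variable {𝕜 ι κ τ : Type*} [RCLike 𝕜] [Fintype ι] [Fintype κ] [Fintype τ]

def rotate {α : Type*} (ψ : ι → κ → τ → α) : κ → τ → ι → α := fun j k i => ψ i j k

def reducedQuadForm (ψ : ι → κ → τ → 𝕜) (v : ι → 𝕜) : ℝ :=
  ∑ j, ∑ k, ‖star v ⬝ᵥ fun i => ψ i j k‖ ^ 2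

def partialInner (ψ : ι → κ → τ → 𝕜) (b : κ → 𝕜) (c : τ → 𝕜) : ι → 𝕜 :=
  fun i => star b ⬝ᵥ fun j => star c ⬝ᵥ ψ i j

theorem sum_norm_sq_rotate (ψ : ι → κ → τ → 𝕜) :
    ∑ j, ∑ k, ∑ i, ‖rotate ψ j k i‖ ^ 2 = ∑ i, ∑ j, ∑ k, ‖ψ i j k‖ ^ 2 :=
  (Finset.sum_congr rfl fun _ _ => Finset.sum_comm).trans Finset.sum_comm

theorem dotProduct_partialInner (ψ : ι → κ → τ → 𝕜) (a : ι → 𝕜) (b : κ → 𝕜) (c : τ → 𝕜) :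
    star a ⬝ᵥ partialInner ψ b c =
      star b ⬝ᵥ fun j => star c ⬝ᵥ fun k => star a ⬝ᵥ fun i => ψ i j k := by
  simp only [partialInner, dotProduct, Finset.mul_sum]
  rw [Finset.sum_comm]
  refine Finset.sum_congr rfl fun j _ => ?_
  rw [Finset.sum_comm]
  exact Finset.sum_congr rfl fun k _ => Finset.sum_congr rfl fun i _ => by ring

theorem sq_sum_norm_sq_partialInner_le (ψ : ι → κ → τ → 𝕜) {b : κ → 𝕜} {c : τ → 𝕜}
    (hb : ∑ j, ‖b j‖ ^ 2 = 1) (hc : ∑ k, ‖c k‖ ^ 2 = 1) :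
    (∑ i, ‖partialInner ψ b c i‖ ^ 2) ^ 2 ≤ reducedQuadForm ψ (partialInner ψ b c) := by
  set φ := partialInner ψ b c
  calc (∑ i, ‖φ i‖ ^ 2) ^ 2 = ‖((∑ i, ‖φ i‖ ^ 2 : ℝ) : 𝕜)‖ ^ 2 := by
        rw [RCLike.norm_ofReal, sq_abs]
    _ = ‖star b ⬝ᵥ fun j => star c ⬝ᵥ fun k => star φ ⬝ᵥ fun i => ψ i j k‖ ^ 2 := by
        rw [Matrix.ofReal_sum_norm_sq, dotProduct_partialInner]
    _ ≤ ∑ j, ‖star c ⬝ᵥ fun k => star φ ⬝ᵥ fun i => ψ i j k‖ ^ 2 :=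
        Matrix.norm_sq_dotProduct_le hb _
    _ ≤ reducedQuadForm ψ φ :=
        Finset.sum_le_sum fun j _ => Matrix.norm_sq_dotProduct_le hc _

theorem reducedQuadForm_rotate_add_le (ψ : ι → κ → τ → 𝕜) {m : ℝ} (hm₀ : 0 ≤ m)
    (hm : ∀ a, reducedQuadForm ψ a ≤ m * ∑ i, ‖a i‖ ^ 2) {b : κ → 𝕜} {c : τ → 𝕜}
    (hb : ∑ j, ‖b j‖ ^ 2 = 1) (hc : ∑ k, ‖c k‖ ^ 2 = 1) :
    reducedQuadForm (rotate ψ) b + reducedQuadForm (rotate (rotate ψ)) c ≤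
      ∑ i, ∑ j, ∑ k, ‖ψ i j k‖ ^ 2 + m := by
  set φ := partialInner ψ b c
  have hsum : reducedQuadForm (rotate ψ) b + reducedQuadForm (rotate (rotate ψ)) c ≤
      ∑ i, ∑ j, ∑ k, ‖ψ i j k‖ ^ 2 + ∑ i, ‖φ i‖ ^ 2 :=
    calc reducedQuadForm (rotate ψ) b + reducedQuadForm (rotate (rotate ψ)) c
        = ∑ i, (∑ k, ‖star b ⬝ᵥ fun j => ψ i j k‖ ^ 2 + ∑ j, ‖star c ⬝ᵥ ψ i j‖ ^ 2) := by
          rw [Finset.sum_add_distrib, reducedQuadForm, Finset.sum_comm]; rfl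
      _ ≤ ∑ i, (∑ j, ∑ k, ‖ψ i j k‖ ^ 2 + ‖φ i‖ ^ 2) :=
          Finset.sum_le_sum fun i _ => Matrix.sum_norm_sq_contract_add_le (ψ i) hb hc
      _ = _ := Finset.sum_add_distrib
  have hφ : ∑ i, ‖φ i‖ ^ 2 ≤ m := by
    have h₁ := sq_sum_norm_sq_partialInner_le ψ hb hc
    have h₂ := hm φ
    have h₃ : 0 ≤ ∑ i, ‖φ i‖ ^ 2 := by positivity
    nlinarith
  linarith

end Tripartite

namespace Matrix.IsHermitian

variable {𝕜 : Type*} [RCLike 𝕜] {A : Matrix (Fin 2) (Fin 2) 𝕜}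

theorem exists_re_dotProduct_mulVec_eq_max (hA : A.IsHermitian) :
    ∃ v : Fin 2 → 𝕜, ∑ j, ‖v j‖ ^ 2 = 1 ∧
      RCLike.re (star v ⬝ᵥ A *ᵥ v) = max (hA.eigenvalues 0) (hA.eigenvalues 1) := by
  rcases max_choice (hA.eigenvalues 0) (hA.eigenvalues 1) with h | h <;> rw [h]
  exacts [hA.exists_re_dotProduct_mulVec_eq 0, hA.exists_re_dotProduct_mulVec_eq 1]

theorem re_dotProduct_mulVec_le_max (hA : A.IsHermitian) (v : Fin 2 → 𝕜) :
    RCLike.re (star v ⬝ᵥ A *ᵥ v) ≤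
      max (hA.eigenvalues 0) (hA.eigenvalues 1) * ∑ i, ‖v i‖ ^ 2 :=
  hA.re_dotProduct_mulVec_le (Fin.forall_fin_two.mpr ⟨le_max_left _ _, le_max_right _ _⟩) v

theorem min_add_max_eigenvalues (hA : A.IsHermitian) :
    min (hA.eigenvalues 0) (hA.eigenvalues 1) + max (hA.eigenvalues 0) (hA.eigenvalues 1) =
      RCLike.re A.trace := by
  simp [min_add_max, hA.trace_eq_sum_eigenvalues, Fin.sum_univ_two]

end Matrix.IsHermitian

open Matrix Tripartite

theorem re_dotProduct_rhoA_mulVec (ψ : Fin 2 → Fin 2 → Fin 2 → ℂ) (v : Fin 2 → ℂ) :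
    RCLike.re (star v ⬝ᵥ rhoA ψ *ᵥ v) = reducedQuadForm ψ v := by
  have h : star v ⬝ᵥ rhoA ψ *ᵥ v = (reducedQuadForm ψ v : ℂ) := by
    rw [reducedQuadForm]
    push_cast
    simp only [← Complex.conj_mul', rhoA, dotProduct, mulVec, Fin.sum_univ_two, Pi.star_apply,
      Complex.star_def, map_add, map_mul, Complex.conj_conj]
    ring
  rw [h]
  exact Complex.ofReal_re _

theorem re_trace_rhoA (ψ : Fin 2 → Fin 2 → Fin 2 → ℂ) :
    RCLike.re (rhoA ψ).trace = ∑ i, ∑ j, ∑ k, ‖ψ i j k‖ ^ 2 := by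
  simp [trace, rhoA, Complex.mul_conj', ← Complex.ofReal_pow]

theorem rhoB_eq_rhoA_rotate (ψ : Fin 2 → Fin 2 → Fin 2 → ℂ) : rhoB ψ = rhoA (rotate ψ) := by
  ext j j'
  exact Finset.sum_comm

theorem rhoC_eq_rhoA_rotate_rotate (ψ : Fin 2 → Fin 2 → Fin 2 → ℂ) :
    rhoC ψ = rhoA (rotate (rotate ψ)) :=
  rfl

/- The matrices are only required to equal the reduced density matrices, so that the
`IsHermitian` proofs of `rhoB ψ` and `rhoC ψ` can serve the cyclically rotated states. -/
theorem min_eigenvalues_rhoA_le_add (ψ : Fin 2 → Fin 2 → Fin 2 → ℂ)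
    {A B C : Matrix (Fin 2) (Fin 2) ℂ} (hA : A.IsHermitian) (hB : B.IsHermitian)
    (hC : C.IsHermitian) (eA : A = rhoA ψ) (eB : B = rhoA (rotate ψ))
    (eC : C = rhoA (rotate (rotate ψ))) :
    min (hA.eigenvalues 0) (hA.eigenvalues 1) ≤
      min (hB.eigenvalues 0) (hB.eigenvalues 1) + min (hC.eigenvalues 0) (hC.eigenvalues 1) := by
  subst eA eB eC
  obtain ⟨b, hb, hbB⟩ := hB.exists_re_dotProduct_mulVec_eq_max
  obtain ⟨c, hc, hcC⟩ := hC.exists_re_dotProduct_mulVec_eq_max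
  have hm : ∀ a,
      reducedQuadForm ψ a ≤ max (hA.eigenvalues 0) (hA.eigenvalues 1) * ∑ i, ‖a i‖ ^ 2 :=
    fun a => re_dotProduct_rhoA_mulVec ψ a ▸ hA.re_dotProduct_mulVec_le_max a
  have tA := hA.min_add_max_eigenvalues
  have tB := hB.min_add_max_eigenvalues
  have tC := hC.min_add_max_eigenvalues
  rw [re_trace_rhoA] at tA tB tC
  rw [sum_norm_sq_rotate] at tB
  rw [sum_norm_sq_rotate (rotate ψ), sum_norm_sq_rotate] at tC
  have hN : 0 ≤ ∑ i, ∑ j, ∑ k, ‖ψ i j k‖ ^ 2 := by positivity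
  have hm₀ : 0 ≤ max (hA.eigenvalues 0) (hA.eigenvalues 1) := by
    linarith [min_le_max (a := hA.eigenvalues 0) (b := hA.eigenvalues 1)]
  have key := reducedQuadForm_rotate_add_le ψ hm₀ hm hb hc
  rw [← re_dotProduct_rhoA_mulVec, hbB, ← re_dotProduct_rhoA_mulVec, hcC] at key
  linarith

theorem higuchi_polygon_inequalities_general
    (ψ : Fin 2 → Fin 2 → Fin 2 → ℂ)
    (hA : (rhoA ψ).IsHermitian) (hB : (rhoB ψ).IsHermitian)
    (hC : (rhoC ψ).IsHermitian) :
    min (hA.eigenvalues 0) (hA.eigenvalues 1) ≤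
        min (hB.eigenvalues 0) (hB.eigenvalues 1) +
          min (hC.eigenvalues 0) (hC.eigenvalues 1) ∧
    min (hB.eigenvalues 0) (hB.eigenvalues 1) ≤
        min (hC.eigenvalues 0) (hC.eigenvalues 1) +
          min (hA.eigenvalues 0) (hA.eigenvalues 1) ∧
    min (hC.eigenvalues 0) (hC.eigenvalues 1) ≤
        min (hA.eigenvalues 0) (hA.eigenvalues 1) +
          min (hB.eigenvalues 0) (hB.eigenvalues 1) := by
  have eB := rhoB_eq_rhoA_rotate ψ
  have eC := rhoC_eq_rhoA_rotate_rotate ψ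
  exact ⟨min_eigenvalues_rhoA_le_add ψ hA hB hC rfl eB eC,
    min_eigenvalues_rhoA_le_add (rotate ψ) hB hC hA eB eC rfl,
    min_eigenvalues_rhoA_le_add (rotate (rotate ψ)) hC hA hB eC rfl eB⟩

/-- Higuchi–Sudbery–Szulc polygon inequalities: for a unit vector
`ψ ∈ ℂ²⊗ℂ²⊗ℂ²`, the smallest eigenvalues of the three one-qubit reduced density
matrices satisfy `λ_A ≤ λ_B + λ_C` and its cyclic permutations. -/
theorem higuchi_polygon_inequalities
    (ψ : Fin 2 → Fin 2 → Fin 2 → ℂ)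
    (hψ : ∑ i : Fin 2, ∑ j : Fin 2, ∑ k : Fin 2, ‖ψ i j k‖ ^ 2 = 1)
    (hA : (rhoA ψ).IsHermitian) (hB : (rhoB ψ).IsHermitian)
    (hC : (rhoC ψ).IsHermitian) :
    min (hA.eigenvalues 0) (hA.eigenvalues 1) ≤
        min (hB.eigenvalues 0) (hB.eigenvalues 1) +
          min (hC.eigenvalues 0) (hC.eigenvalues 1) ∧
    min (hB.eigenvalues 0) (hB.eigenvalues 1) ≤
        min (hC.eigenvalues 0) (hC.eigenvalues 1) +
          min (hA.eigenvalues 0) (hA.eigenvalues 1) ∧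
    min (hC.eigenvalues 0) (hC.eigenvalues 1) ≤
        min (hA.eigenvalues 0) (hA.eigenvalues 1) +
          min (hB.eigenvalues 0) (hB.eigenvalues 1) :=
  higuchi_polygon_inequalities_general ψ hA hB hC
end
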